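/- Let E = {0,1}, fix ε ∈ (0, 1/2), and consider the Feynman–Kac model with G_n ≡ 1 and M_n(x, ·) = (1−ε)δ_x + ε δ_{1−x} for all n ≥ 1. Let x₀^{1:N} = (0, …, 0) ∈ E^N and x̃₀^{1:N} = (1, …, 1) ∈ E^N, and set δ_ε = 1/log((1−2ε)^{-2}). Then for any sequence (k(N))_{N≥1} of natural numbers such that δ_ε·log N − k(N) → ∞, we have ‖𝐌_{0,k(N)}(x₀^{1:N}, ·) − 𝐌_{0,k(N)}(x̃₀^{1:N}, ·)‖_TV → 1 as N → ∞. -/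

import Mathlib

/-!
Each particle independently lands in state `1` with probability `ε + (1 - 2ε) F`, where `F` is
the current fraction of ones. Hence the mean of `F` contracts towards `1/2` at rate `1 - 2ε`,
while by the law of total variance (each step adds conditional variance at most `1/(4N)`) the
variance of `F` stays below `1/(4N(1 - (1 - 2ε)²))` at all times. Started from all zeros, resp.
all ones, the mean of `F` after `k` steps is `1/2 ∓ (1 - 2ε)^k / 2`, so Chebyshev's inequality on
the event `{F < 1/2}` gives a total variation at least `1 - C / (N (1 - 2ε)^{2k})`; the
hypothesis on `k(N)` says exactly that `N (1 - 2ε)^{2k(N)} → ∞`.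
-/

open MeasureTheory ProbabilityTheory ENNReal Filter

noncomputable section

/-- Total variation distance between measures. -/
def tvDist {E : Type*} [MeasurableSpace E] (μ ν : Measure E) : ℝ :=
  ⨆ A : {s : Set E // MeasurableSet s}, |(μ A.1).toReal - (ν A.1).toReal|

/-- Dobrushin contraction coefficient of a Markov kernel. -/
def dobrushin {E : Type*} [MeasurableSpace E] (M : Kernel E E) : ℝ :=
  ⨆ x, ⨆ y, tvDist (M x) (M y)

/-- Boltzmann–Gibbs update Ψ. -/
def BG {E : Type*} [MeasurableSpace E] (G : E → ℝ) (μ : Measure E) : Measure E :=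
  (∫⁻ x, ENNReal.ofReal (G x) ∂μ)⁻¹ • μ.withDensity fun x => ENNReal.ofReal (G x)

/-- One-step map `Φ_j(μ) = Ψ_{j-1}(μ) M_j` (for `j ≥ 1`). -/
def Phi {E : Type*} [MeasurableSpace E] (G : ℕ → E → ℝ) (M : ℕ → Kernel E E)
    (j : ℕ) (μ : Measure E) : Measure E :=
  (BG (G (j - 1)) μ).bind (M j)

/-- Iterated map `Φ_{0,n}`. -/
def PhiComp {E : Type*} [MeasurableSpace E] (G : ℕ → E → ℝ) (M : ℕ → Kernel E E) :
    ℕ → Measure E → Measure E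
  | 0 => id
  | n + 1 => fun μ => Phi G M (n + 1) (PhiComp G M n μ)

/-- Empirical measure of `N` particles. -/
def empMeas {E : Type*} [MeasurableSpace E] {N : ℕ} (x : Fin N → E) : Measure E :=
  ((N : ℝ≥0∞))⁻¹ • ∑ i, Measure.dirac (x i)

/-- Reference-perturbed empirical measure (conditional particle filter). -/
def cEmp {E : Type*} [MeasurableSpace E] {N : ℕ} (xstar : E) (x : Fin N → E) : Measure E :=
  ((N : ℝ≥0∞) + 1)⁻¹ • (Measure.dirac xstar + ∑ i, Measure.dirac (x i))

/-- Composition of kernels `𝐌_{n,n+k} = 𝐌_{n+k} ∘ ⋯ ∘ 𝐌_{n+1}`. -/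
def kernelComp {α : Type*} [MeasurableSpace α] (K : ℕ → Kernel α α) (n : ℕ) :
    ℕ → Kernel α α
  | 0 => Kernel.id
  | k + 1 => (K (n + k + 1)).comp (kernelComp K n k)

/-- Perturbed Boltzmann–Gibbs update `Ψ̂`. -/
def hatBG {E : Type*} [MeasurableSpace E] (G : E → ℝ) (xstar : E) (N : ℕ) (μ : Measure E) :
    Measure E :=
  BG G (((N : ℝ≥0∞) + 1)⁻¹ • Measure.dirac xstar + ((N : ℝ≥0∞) / ((N : ℝ≥0∞) + 1)) • μ)

/-- `L^p` norm of a real random variable. -/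
def lpN {Ω : Type*} [MeasurableSpace Ω] (P : Measure Ω) (p : ℝ) (X : Ω → ℝ) : ℝ :=
  (∫ ω, |X ω| ^ p ∂P) ^ (1 / p)

/-- Oscillation of a real-valued function. -/
def osc {E : Type*} (f : E → ℝ) : ℝ := ⨆ x, ⨆ y, (f x - f y)

/-- Squared Hellinger distance with respect to a dominating measure `lam`. -/
def hellingerSq {E : Type*} [MeasurableSpace E] (lam P Q : Measure E) : ℝ :=
  1 - (∫⁻ x, (P.rnDeriv lam x * Q.rnDeriv lam x) ^ (1 / 2 : ℝ) ∂lam).toReal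

/-- `Qaux G m lam g k = Q_{k,k+g}`, defined through the densities `m` of the kernels. -/
def Qaux {E : Type*} [MeasurableSpace E] (G : ℕ → E → ℝ) (m : ℕ → E → E → ℝ)
    (lam : Measure E) : ℕ → ℕ → (E → ℝ) → E → ℝ
  | 0, _, φ => φ
  | g + 1, k, φ => fun x => G k x * ∫ y, m (k + 1) x y * Qaux G m lam g (k + 1) φ y ∂lam

end

section TotalVariation

variable {E : Type*} [MeasurableSpace E] {μ ν : Measure E} [IsProbabilityMeasure μ]
  [IsProbabilityMeasure ν]

lemma abs_measureReal_sub_le_one (s : Set E) : |μ.real s - ν.real s| ≤ 1 :=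
  abs_sub_le_of_nonneg_of_le measureReal_nonneg measureReal_le_one measureReal_nonneg
    measureReal_le_one

lemma tvDist_le_one : tvDist μ ν ≤ 1 :=
  ciSup_le fun s => abs_measureReal_sub_le_one s.1

lemma abs_measureReal_sub_le_tvDist {s : Set E} (hs : MeasurableSet s) :
    |μ.real s - ν.real s| ≤ tvDist μ ν :=
  le_ciSup (f := fun s : {s : Set E // MeasurableSet s} => |μ.real s - ν.real s|)
    ⟨1, by rintro _ ⟨s, rfl⟩; exact abs_measureReal_sub_le_one s.1⟩ ⟨s, hs⟩

/-- Chebyshev's inequality on the threshold set `{f < t}` separates two laws whose means of `f`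
lie at distance `d` on either side of `t`. -/
lemma one_sub_variance_div_le_tvDist {f : E → ℝ} (hμf : MemLp f 2 μ) (hνf : MemLp f 2 ν)
    (hf : Measurable f) {t d : ℝ} (hd : 0 < d) (hμt : μ[f] + d ≤ t) (hνt : t + d ≤ ν[f]) :
    1 - (Var[f; μ] + Var[f; ν]) / d ^ 2 ≤ tvDist μ ν := by
  set A := {x | f x < t}
  have hA : MeasurableSet A := measurableSet_lt hf measurable_const
  have hμA : μ.real Aᶜ ≤ Var[f; μ] / d ^ 2 := by
    refine (measureReal_mono fun x hx => ?_).trans <| ENNReal.toReal_le_of_le_ofReal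
      (div_nonneg (variance_nonneg _ _) (sq_nonneg _)) (meas_ge_le_variance_div_sq hμf hd)
    have hx : t ≤ f x := not_lt.1 hx
    show d ≤ |f x - μ[f]|
    exact le_abs.2 (Or.inl (by linarith))
  have hνA : ν.real A ≤ Var[f; ν] / d ^ 2 := by
    refine (measureReal_mono fun x hx => ?_).trans <| ENNReal.toReal_le_of_le_ofReal
      (div_nonneg (variance_nonneg _ _) (sq_nonneg _)) (meas_ge_le_variance_div_sq hνf hd)
    have hx : f x < t := hx
    show d ≤ |f x - ν[f]|
    exact le_abs.2 (Or.inr (by linarith))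
  have htot : μ.real A + μ.real Aᶜ = 1 := by
    rw [measureReal_add_measureReal_compl hA, probReal_univ]
  rw [add_div]
  linarith [le_abs_self (μ.real A - ν.real A),
    abs_measureReal_sub_le_tvDist (μ := μ) (ν := ν) hA]

end TotalVariation

section FiniteKernel

variable {α Ω : Type*} [MeasurableSpace α] [MeasurableSpace Ω] [Finite Ω]
  [DiscreteMeasurableSpace Ω] {f : Ω → ℝ} {m b c : ℝ}

lemma integral_comp_of_affine_mean (κ : Kernel α Ω) [IsMarkovKernel κ] (η : Kernel Ω Ω)
    [IsMarkovKernel η] (hη : ∀ x, ∫ y, f y ∂η x = m + b * (f x - m)) (a : α) :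
    ∫ y, f y ∂(η ∘ₖ κ) a = m + b * (∫ y, f y ∂κ a - m) := by
  rw [Kernel.integral_comp .of_finite]
  simp_rw [hη]
  rw [integral_add (integrable_const _) .of_finite, integral_const_mul,
    integral_sub .of_finite (integrable_const _)]
  simp

/-- Law of total variance. -/
lemma variance_comp_le_of_affine_mean (κ : Kernel α Ω) [IsMarkovKernel κ] (η : Kernel Ω Ω)
    [IsMarkovKernel η] (hη : ∀ x, ∫ y, f y ∂η x = m + b * (f x - m))
    (hvar : ∀ x, Var[f; η x] ≤ c) (a : α) :
    Var[f; (η ∘ₖ κ) a] ≤ b ^ 2 * Var[f; κ a] + c := by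
  set g : Ω → ℝ := fun x => m + b * (f x - m)
  have hsq : ∀ x, ∫ y, f y ^ 2 ∂η x = Var[f; η x] + g x ^ 2 := fun x => by
    rw [variance_eq_sub .of_discrete, hη]
    simp [g]
  have hg : Var[g; κ a] = b ^ 2 * Var[f; κ a] := by
    have hg' : g = fun x => (m - b * m) + b * f x := by ext; simp only [g]; ring
    rw [hg', variance_const_add (measurable_of_finite _).aestronglyMeasurable,
      variance_const_mul]
  calc Var[f; (η ∘ₖ κ) a]
      = ∫ x, (Var[f; η x] + g x ^ 2) ∂κ a - (∫ x, g x ∂κ a) ^ 2 := by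
        rw [variance_eq_sub .of_discrete, Kernel.integral_comp .of_finite,
          Kernel.integral_comp .of_finite]
        simp only [Pi.pow_apply, hsq, hη, g]
    _ ≤ ∫ x, (c + g x ^ 2) ∂κ a - (∫ x, g x ∂κ a) ^ 2 := by
        gcongr
        exacts [.of_finite, .of_finite, fun x => by simpa using hvar x]
    _ = b ^ 2 * Var[f; κ a] + c := by
        rw [integral_add (integrable_const _) .of_finite, integral_const, ← hg,
          variance_eq_sub .of_discrete]
        simp only [Pi.pow_apply, probReal_univ, smul_eq_mul, one_mul]
        ring

end FiniteKernel

section KernelComp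

variable {Ω : Type*} [MeasurableSpace Ω] {K : ℕ → Kernel Ω Ω} {n : ℕ}

lemma isMarkovKernel_kernelComp (hK : ∀ j, n < j → IsMarkovKernel (K j)) :
    ∀ k, IsMarkovKernel (kernelComp K n k)
  | 0 => inferInstanceAs (IsMarkovKernel Kernel.id)
  | k + 1 =>
    have := hK (n + k + 1) (by omega)
    have := isMarkovKernel_kernelComp hK k
    inferInstanceAs (IsMarkovKernel (K (n + k + 1) ∘ₖ kernelComp K n k))

variable [Finite Ω] [DiscreteMeasurableSpace Ω] {f : Ω → ℝ} {m b c : ℝ}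
  (hK : ∀ j, n < j → IsMarkovKernel (K j))
  (hmean : ∀ j, n < j → ∀ x, ∫ y, f y ∂K j x = m + b * (f x - m))

include hK hmean in
lemma integral_kernelComp_of_affine_mean (x : Ω) :
    ∀ k, ∫ y, f y ∂kernelComp K n k x = m + b ^ k * (f x - m)
  | 0 => by simp [kernelComp, Kernel.id_apply]
  | k + 1 => by
    have := hK (n + k + 1) (by omega)
    have := isMarkovKernel_kernelComp hK k
    rw [kernelComp, integral_comp_of_affine_mean _ _ (hmean _ (by omega)),
      integral_kernelComp_of_affine_mean x k]
    ring

include hK hmean in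
lemma variance_kernelComp_le_of_affine_mean (hvar : ∀ j, n < j → ∀ x, Var[f; K j x] ≤ c)
    (hb : b ^ 2 < 1) (x : Ω) : ∀ k, Var[f; kernelComp K n k x] ≤ c / (1 - b ^ 2)
  | 0 => by
    have hc : 0 ≤ c := (variance_nonneg _ _).trans (hvar (n + 1) (by omega) x)
    simpa [kernelComp, Kernel.id_apply, variance_dirac] using div_nonneg hc (by linarith)
  | k + 1 => by
    have := hK (n + k + 1) (by omega)
    have := isMarkovKernel_kernelComp hK k
    have hstep := variance_comp_le_of_affine_mean (kernelComp K n k) (K (n + k + 1))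
      (hmean _ (by omega)) (hvar _ (by omega)) x
    have hprev := variance_kernelComp_le_of_affine_mean hvar hb x k
    calc Var[f; kernelComp K n (k + 1) x] ≤ b ^ 2 * (c / (1 - b ^ 2)) + c := by
          refine hstep.trans ?_
          gcongr
      _ = c / (1 - b ^ 2) := by
          have : 1 - b ^ 2 ≠ 0 := by linarith
          field_simp
          ring

end KernelComp

section Bernoulli

noncomputable def bernoulliFin (p : ℝ) : Measure (Fin 2) :=
  ENNReal.ofReal (1 - p) • Measure.dirac 0 + ENNReal.ofReal p • Measure.dirac 1

variable {p : ℝ}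

lemma isProbabilityMeasure_bernoulliFin (h0 : 0 ≤ p) (h1 : p ≤ 1) :
    IsProbabilityMeasure (bernoulliFin p) := by
  constructor
  simp [bernoulliFin, ← ENNReal.ofReal_add (sub_nonneg.2 h1) h0]

lemma integral_bernoulliFin (h0 : 0 ≤ p) (h1 : p ≤ 1) (g : Fin 2 → ℝ) :
    ∫ b, g b ∂bernoulliFin p = (1 - p) * g 0 + p * g 1 := by
  rw [bernoulliFin, integral_add_measure (Integrable.of_finite.smul_measure ENNReal.ofReal_ne_top)
    (Integrable.of_finite.smul_measure ENNReal.ofReal_ne_top), integral_smul_measure,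
    integral_smul_measure, integral_dirac, integral_dirac, ENNReal.toReal_ofReal h0,
    ENNReal.toReal_ofReal (sub_nonneg.2 h1), smul_eq_mul, smul_eq_mul]

lemma variance_val_bernoulliFin (h0 : 0 ≤ p) (h1 : p ≤ 1) :
    Var[fun b : Fin 2 => (b : ℝ); bernoulliFin p] = p * (1 - p) := by
  have := isProbabilityMeasure_bernoulliFin h0 h1
  rw [variance_eq_sub .of_discrete]
  simp only [Pi.pow_apply, integral_bernoulliFin h0 h1, Fin.val_zero, Fin.val_one,
    Nat.cast_zero, Nat.cast_one]
  ring

noncomputable def fracOnes {N : ℕ} (x : Fin N → Fin 2) : ℝ := (∑ i, (x i : ℝ)) / N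

lemma fin_two_cast_mem_Icc (b : Fin 2) : (b : ℝ) ∈ Set.Icc 0 1 := by
  fin_cases b <;> simp

lemma fracOnes_mem_Icc {N : ℕ} (x : Fin N → Fin 2) : fracOnes x ∈ Set.Icc 0 1 := by
  refine ⟨by unfold fracOnes; positivity, div_le_one_of_le₀ ?_ (Nat.cast_nonneg N)⟩
  calc ∑ i, (x i : ℝ) ≤ ∑ _i : Fin N, (1 : ℝ) :=
        Finset.sum_le_sum fun i _ => (fin_two_cast_mem_Icc (x i)).2
    _ = N := by simp

variable {N : ℕ} (h0 : 0 ≤ p) (h1 : p ≤ 1)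

include h0 h1 in
lemma integral_fracOnes_pi (hN : N ≠ 0) :
    ∫ x, fracOnes x ∂Measure.pi (fun _ : Fin N => bernoulliFin p) = p := by
  have := isProbabilityMeasure_bernoulliFin h0 h1
  unfold fracOnes
  rw [integral_div, integral_finsetSum _ fun i _ => .of_finite]
  simp_rw [integral_comp_eval (μ := fun _ => bernoulliFin p) (f := fun b : Fin 2 => (b : ℝ))
    .of_discrete, integral_bernoulliFin h0 h1]
  simp [hN]

include h0 h1 in
lemma variance_coord_pi (i : Fin N) :
    Var[fun x => (x i : ℝ); Measure.pi (fun _ : Fin N => bernoulliFin p)] = p * (1 - p) := by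
  have := isProbabilityMeasure_bernoulliFin h0 h1
  rw [← variance_val_bernoulliFin h0 h1]
  have heval := measurePreserving_eval (fun _ : Fin N => bernoulliFin p) i
  conv_rhs => rw [← heval.map_eq, variance_map .of_discrete heval.measurable.aemeasurable]
  rfl

include h0 h1 in
lemma variance_fracOnes_pi :
    Var[fracOnes; Measure.pi (fun _ : Fin N => bernoulliFin p)] = p * (1 - p) / N := by
  have := isProbabilityMeasure_bernoulliFin h0 h1
  have hind : iIndepFun (fun i (x : Fin N → Fin 2) => (x i : ℝ))
      (Measure.pi fun _ : Fin N => bernoulliFin p) :=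
    iIndepFun_pi (X := fun _ (b : Fin 2) => (b : ℝ)) fun _ => .of_discrete
  have hfrac : (fracOnes : (Fin N → Fin 2) → ℝ)
      = fun x => (N : ℝ)⁻¹ * (∑ i, fun x : Fin N → Fin 2 => (x i : ℝ)) x := by
    ext x
    simp [fracOnes, Finset.sum_apply, div_eq_inv_mul]
  rw [hfrac, variance_const_mul, IndepFun.variance_sum (fun i _ => .of_discrete)
    fun i _ j _ hij => hind.indepFun hij]
  simp_rw [variance_coord_pi h0 h1]
  rcases eq_or_ne (N : ℝ) 0 with hN | hN
  · simp [hN]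
  · simp only [inv_pow, Finset.sum_const, Finset.card_univ, Fintype.card_fin, nsmul_eq_mul]
    field_simp

end Bernoulli

section TwoStateModel

lemma bind_empMeas {E F : Type*} [MeasurableSpace E] [MeasurableSpace F] {N : ℕ}
    (x : Fin N → E) (κ : Kernel E F) :
    (empMeas x).bind κ = (N : ℝ≥0∞)⁻¹ • ∑ i, κ (x i) := by
  ext s hs
  rw [Measure.bind_apply hs κ.aemeasurable, empMeas, lintegral_smul_measure,
    lintegral_finsetSum_measure, Measure.smul_apply, Measure.finsetSum_apply]
  simp_rw [lintegral_dirac' _ (κ.measurable_coe hs)]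

lemma inv_natCast_mul_sum_ofReal {N : ℕ} (hN : N ≠ 0) {g : Fin N → ℝ} (hg : ∀ i, 0 ≤ g i) :
    (N : ℝ≥0∞)⁻¹ * ∑ i, ENNReal.ofReal (g i) = ENNReal.ofReal ((∑ i, g i) / N) := by
  rw [← ENNReal.ofReal_sum_of_nonneg fun i _ => hg i, div_eq_inv_mul,
    ENNReal.ofReal_mul (by positivity), ENNReal.ofReal_inv_of_pos (by positivity),
    ENNReal.ofReal_natCast]

lemma inv_natCast_smul_sum_bernoulliFin {N : ℕ} (hN : N ≠ 0) {q : Fin N → ℝ}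
    (hq : ∀ i, q i ∈ Set.Icc 0 1) :
    (N : ℝ≥0∞)⁻¹ • ∑ i, bernoulliFin (q i) = bernoulliFin ((∑ i, q i) / N) := by
  simp only [bernoulliFin, Finset.sum_add_distrib, ← Finset.sum_smul, smul_add, smul_smul]
  rw [inv_natCast_mul_sum_ofReal hN fun i => sub_nonneg.2 (hq i).2,
    inv_natCast_mul_sum_ofReal hN fun i => (hq i).1, Finset.sum_sub_distrib]
  congr 3
  simp [field]

lemma isProbabilityMeasure_empMeas {E : Type*} [MeasurableSpace E] {N : ℕ} (hN : N ≠ 0)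
    (x : Fin N → E) : IsProbabilityMeasure (empMeas x) :=
  ⟨by simp [empMeas, ENNReal.inv_mul_cancel (Nat.cast_ne_zero.2 hN)]⟩

lemma BG_one {E : Type*} [MeasurableSpace E] (μ : Measure E) [IsProbabilityMeasure μ] :
    BG (fun _ => (1 : ℝ)) μ = μ := by
  simp [BG]

variable {ε : ℝ}

lemma flipProb_mem_Icc (hε : ε ∈ Set.Icc 0 1) {t : ℝ} (ht : t ∈ Set.Icc 0 1) :
    ε + (1 - 2 * ε) * t ∈ Set.Icc 0 1 := by
  obtain ⟨hε0, hε1⟩ := hε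
  obtain ⟨ht0, ht1⟩ := ht
  constructor <;> nlinarith

lemma flipKernel_eq_bernoulliFin {M : Kernel (Fin 2) (Fin 2)}
    (hM : ∀ x, M x = ENNReal.ofReal (1 - ε) • Measure.dirac x
      + ENNReal.ofReal ε • Measure.dirac (1 - x)) (b : Fin 2) :
    M b = bernoulliFin (ε + (1 - 2 * ε) * b) := by
  fin_cases b
  · simp [hM, bernoulliFin]
  · simp only [Fin.mk_one, hM, sub_self, add_comm, bernoulliFin, Nat.cast_one, mul_one]
    ring_nf

lemma Phi_one_empMeas_eq_bernoulliFin (hε : ε ∈ Set.Icc 0 1)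
    {Mker : ℕ → Kernel (Fin 2) (Fin 2)} (hMker : ∀ j (x : Fin 2), (Mker j) x = ENNReal.ofReal (1 - ε) • Measure.dirac x
      + ENNReal.ofReal ε • Measure.dirac (1 - x)) {N : ℕ} (hN : N ≠ 0) (j : ℕ)
    (x : Fin N → Fin 2) :
    Phi (fun _ _ => (1 : ℝ)) Mker j (empMeas x)
      = bernoulliFin (ε + (1 - 2 * ε) * fracOnes x) := by
  have := isProbabilityMeasure_empMeas hN x
  rw [Phi, BG_one, bind_empMeas]
  simp_rw [flipKernel_eq_bernoulliFin (hMker j)]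
  rw [inv_natCast_smul_sum_bernoulliFin hN fun i =>
    flipProb_mem_Icc hε (fin_two_cast_mem_Icc (x i))]
  congr 1
  rw [fracOnes, Finset.sum_add_distrib, ← Finset.mul_sum]
  simp [field]

end TwoStateModel

section ParticleChain

variable {ε : ℝ} {N : ℕ} {K : ℕ → Kernel (Fin N → Fin 2) (Fin N → Fin 2)}
  (hK : ∀ j, 0 < j → ∀ x,
    K j x = Measure.pi fun _ : Fin N => bernoulliFin (ε + (1 - 2 * ε) * fracOnes x))

include hK in
lemma isMarkovKernel_of_flip (hε : ε ∈ Set.Icc 0 1) (j : ℕ) (hj : 0 < j) :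
    IsMarkovKernel (K j) := by
  refine ⟨fun x => ?_⟩
  obtain ⟨h0, h1⟩ := flipProb_mem_Icc hε (fracOnes_mem_Icc x)
  have := isProbabilityMeasure_bernoulliFin h0 h1
  rw [hK j hj x]
  infer_instance

include hK in
lemma integral_fracOnes_of_flip (hε : ε ∈ Set.Icc 0 1) (hN : N ≠ 0) (j : ℕ) (hj : 0 < j)
    (x : Fin N → Fin 2) :
    ∫ y, fracOnes y ∂K j x = 1 / 2 + (1 - 2 * ε) * (fracOnes x - 1 / 2) := by
  obtain ⟨h0, h1⟩ := flipProb_mem_Icc hε (fracOnes_mem_Icc x)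
  rw [hK j hj x, integral_fracOnes_pi h0 h1 hN]
  ring

include hK in
lemma variance_fracOnes_of_flip_le (hε : ε ∈ Set.Icc 0 1) (j : ℕ) (hj : 0 < j)
    (x : Fin N → Fin 2) :
    Var[fracOnes; K j x] ≤ 1 / (4 * N) := by
  obtain ⟨h0, h1⟩ := flipProb_mem_Icc hε (fracOnes_mem_Icc x)
  rw [hK j hj x, variance_fracOnes_pi h0 h1, ← div_div]
  gcongr
  nlinarith [sq_nonneg (2 * (ε + (1 - 2 * ε) * fracOnes x) - 1)]

include hK in
lemma one_sub_le_tvDist_of_flip (hε : ε ∈ Set.Ioo 0 (1 / 2)) (hN : N ≠ 0) (k : ℕ) :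
    1 - 2 / (1 - (1 - 2 * ε) ^ 2) / (N * ((1 - 2 * ε) ^ 2) ^ k)
      ≤ tvDist (kernelComp K 0 k fun _ => 0) (kernelComp K 0 k fun _ => 1) := by
  obtain ⟨hε0, hε1⟩ := hε
  have hεI : ε ∈ Set.Icc 0 1 := ⟨hε0.le, by linarith⟩
  have hr0 : 0 < 1 - 2 * ε := by linarith
  have hr2 : (1 - 2 * ε) ^ 2 < 1 := by nlinarith
  have hMarkov := isMarkovKernel_of_flip hK hεI
  have hmean := integral_fracOnes_of_flip hK hεI hN
  have := isMarkovKernel_kernelComp hMarkov k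
  have hvar : ∀ s, Var[fracOnes; kernelComp K 0 k s] ≤ 1 / (4 * N) / (1 - (1 - 2 * ε) ^ 2) :=
    fun s => variance_kernelComp_le_of_affine_mean hMarkov hmean
      (variance_fracOnes_of_flip_le hK hεI) hr2 s k
  have hμ0 := integral_kernelComp_of_affine_mean hMarkov hmean (fun _ => 0) k
  have hμ1 := integral_kernelComp_of_affine_mean hMarkov hmean (fun _ => 1) k
  have hfrac0 : fracOnes (fun _ : Fin N => (0 : Fin 2)) = 0 := by simp [fracOnes]
  have hfrac1 : fracOnes (fun _ : Fin N => (1 : Fin 2)) = 1 := by simp [fracOnes, hN]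
  rw [hfrac0] at hμ0
  rw [hfrac1] at hμ1
  refine le_trans ?_ (one_sub_variance_div_le_tvDist .of_discrete .of_discrete
    (measurable_of_finite _) (t := 1 / 2) (d := (1 - 2 * ε) ^ k / 2) (by positivity)
    (by rw [hμ0]; linarith) (by rw [hμ1]; linarith))
  calc 1 - 2 / (1 - (1 - 2 * ε) ^ 2) / (N * ((1 - 2 * ε) ^ 2) ^ k)
      = 1 - (1 / (4 * N) / (1 - (1 - 2 * ε) ^ 2) + 1 / (4 * N) / (1 - (1 - 2 * ε) ^ 2))
          / ((1 - 2 * ε) ^ k / 2) ^ 2 := by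
        have : 1 - (1 - 2 * ε) ^ 2 ≠ 0 := by linarith
        rw [← pow_mul, mul_comm 2 k, pow_mul]
        field_simp
        ring
    _ ≤ _ := by gcongr <;> exact hvar _

end ParticleChain

lemma tendsto_natCast_mul_pow_atTop {q : ℝ} (hq0 : 0 < q) (hq1 : q < 1) {k : ℕ → ℕ}
    (hk : Tendsto (fun N : ℕ => 1 / Real.log q⁻¹ * Real.log N - k N) atTop atTop) :
    Tendsto (fun N : ℕ => N * q ^ k N) atTop atTop := by
  have hL : 0 < Real.log q⁻¹ := Real.log_pos ((one_lt_inv₀ hq0).2 hq1)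
  refine (Real.tendsto_exp_atTop.comp (hk.const_mul_atTop hL)).congr' ?_
  filter_upwards [eventually_ne_atTop 0] with N hN
  have hN' : (0 : ℝ) < N := by positivity
  rw [Function.comp_apply, mul_sub, ← mul_assoc, mul_one_div_cancel hL.ne', one_mul,
    Real.exp_sub, Real.exp_log hN', Real.log_inv, neg_mul, Real.exp_neg, div_inv_eq_mul,
    ← Real.rpow_def_of_pos hq0, Real.rpow_natCast]

/-- Theorem `simpler-example`: in the two-state model with flip
probability `ε ∈ (0,1/2)` and unit potentials, if `δ_ε log N - k(N) → ∞` with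
`δ_ε = 1/log((1-2ε)⁻²)`, then the total variation between the laws of the particle filter
started from all-zeros and from all-ones at time `k(N)` tends to `1`. -/
theorem two_state_no_forgetting (ε : ℝ) (hε : ε ∈ Set.Ioo (0 : ℝ) (1 / 2))
    (Mker : ℕ → Kernel (Fin 2) (Fin 2))
    (hMker : ∀ j (x : Fin 2),
      (Mker j) x = ENNReal.ofReal (1 - ε) • Measure.dirac x
        + ENNReal.ofReal ε • Measure.dirac (1 - x))
    (K : (N : ℕ) → ℕ → Kernel (Fin N → Fin 2) (Fin N → Fin 2))
    (hK : ∀ (N : ℕ) (j : ℕ), 1 ≤ j → ∀ x,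
      (K N j) x = Measure.pi fun _ : Fin N =>
        Phi (fun _ _ => (1 : ℝ)) Mker j (empMeas x))
    (kk : ℕ → ℕ)
    (hkk : Tendsto
      (fun N : ℕ => (1 / Real.log (((1 - 2 * ε) ^ 2)⁻¹)) * Real.log N - (kk N : ℝ))
      atTop atTop) :
    Tendsto
      (fun N : ℕ => tvDist
        ((kernelComp (K N) 0 (kk N)) (fun _ : Fin N => (0 : Fin 2)))
        ((kernelComp (K N) 0 (kk N)) (fun _ : Fin N => (1 : Fin 2))))
      atTop (nhds 1) := by
  obtain ⟨hε0, hε1⟩ := hε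
  have hεI : ε ∈ Set.Icc 0 1 := ⟨hε0.le, by linarith⟩
  have hflip : ∀ N, N ≠ 0 → ∀ j, 0 < j → ∀ x, K N j x
      = Measure.pi fun _ : Fin N => bernoulliFin (ε + (1 - 2 * ε) * fracOnes x) :=
    fun N hN j hj x => by rw [hK N j hj x, Phi_one_empMeas_eq_bernoulliFin hεI hMker hN]
  have hq0 : 0 < (1 - 2 * ε) ^ 2 := pow_pos (by linarith) 2
  have hq1 : (1 - 2 * ε) ^ 2 < 1 := by nlinarith
  have hlim := (tendsto_natCast_mul_pow_atTop hq0 hq1 hkk).const_div_atTop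
    (2 / (1 - (1 - 2 * ε) ^ 2))
  refine tendsto_of_tendsto_of_tendsto_of_le_of_le'
    (by simpa using tendsto_const_nhds.sub hlim) tendsto_const_nhds ?_ ?_
  · filter_upwards [eventually_ne_atTop 0] with N hN
    exact one_sub_le_tvDist_of_flip (hflip N hN) ⟨hε0, hε1⟩ hN (kk N)
  · filter_upwards [eventually_ne_atTop 0] with N hN
    have := isMarkovKernel_kernelComp (isMarkovKernel_of_flip (hflip N hN) hεI) (kk N)
    exact tvDist_le_one
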